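/- Let 𝒜 be a nonempty family of infinite real matrices with sup_{A ∈ 𝒜} sup_n ∑_k |a_{n,k}| < ∞. Then limsup_n sup_{A ∈ 𝒜} A_n x ≤ limsup_n x_n for all bounded real sequences x if and only if: (L1) lim_n ∑_{k ∈ E} |a_{n,k}| = 0 uniformly in A ∈ 𝒜 for every finite set E, (L2) lim_n ∑_k a_{n,k} = 1 uniformly in A ∈ 𝒜, and (L3) lim_n ∑_k |a_{n,k}| = 1 uniformly in A ∈ 𝒜. -/

import Mathlib

/-!
Sufficiency: for `x` bounded and `δ > 0` pick `K` with `x k ≤ limsup x + δ` for `k ≥ K`. Once the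
head `∑_{k<K} |a_{n,k}|` and the defects in (L2), (L3) are below `δ`, the negative part of the row
has mass at most `2δ`, so `A_n x ≤ limsup x + O(δ)` uniformly in `A`.

Necessity: testing with `±e_j` and `±1` gives (L1) and (L2). If (L3) failed, a gliding hump
produces rows `A_i(n_i, ·)` with `n_i → ∞`, mass `> 1 + ε` and almost all of it on pairwise
disjoint blocks of columns. Following the signs of each row on its block gives one `x` with
`|x| ≤ 1` and `A_i(n_i) x > 1 + ε/2` for all `i`, while `limsup x ≤ 1`.
-/

open Filter Finset Function

section Series

variable {a x : ℕ → ℝ}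

lemma summable_mul_of_abs_le {M : ℝ} (ha : Summable fun k => |a k|) (hx : ∀ k, |x k| ≤ M) :
    Summable fun k => a k * x k :=
  Summable.of_norm_bounded (ha.mul_right M) fun k => by
    rw [Real.norm_eq_abs, abs_mul]
    exact mul_le_mul_of_nonneg_left (hx k) (abs_nonneg _)

lemma abs_tsum_mul_le {M : ℝ} (ha : Summable fun k => |a k|) (hx : ∀ k, |x k| ≤ M) :
    |∑' k, a k * x k| ≤ (∑' k, |a k|) * M :=
  tsum_mul_right (f := fun k => |a k|) ▸
    tsum_of_norm_bounded (ha.mul_right M).hasSum fun k => by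
      rw [Real.norm_eq_abs, abs_mul]
      exact mul_le_mul_of_nonneg_left (hx k) (abs_nonneg _)

/-- Termwise, `a k * x k ≤ c * a k + B * (|a k| - a k)` once `x k ≤ c`, and
`a k * x k ≤ c * a k + B * |a k|` always. -/
lemma tsum_mul_le_of_tail_le {c B : ℝ} {K : ℕ} (ha : Summable fun k => |a k|)
    (hxB : ∀ k, |x k - c| ≤ B) (hxc : ∀ k, K ≤ k → x k ≤ c) :
    ∑' k, a k * x k ≤
      c * ∑' k, a k + B * (∑' k, |a k| - ∑' k, a k) + B * ∑ k ∈ range K, |a k| := by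
  have ha' : Summable a := ha.of_abs
  set head := (range K : Set ℕ).indicator fun k => B * |a k|
  have hterm : ∀ k, a k * x k ≤ c * a k + B * (|a k| - a k) + head k := by
    intro k
    have hB := (abs_nonneg _).trans (hxB k)
    have hdev : |a k * (x k - c)| ≤ |a k| * B := by
      rw [abs_mul]; exact mul_le_mul_of_nonneg_left (hxB k) (abs_nonneg _)
    by_cases hk : k < K
    · have := abs_le.1 hdev
      rw [show head k = B * |a k| from Set.indicator_of_mem (by simpa using hk) _]
      nlinarith [le_abs_self (a k)]
    · rw [show head k = 0 from Set.indicator_of_notMem (by simpa using hk) _, add_zero]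
      have := hxc k (not_lt.1 hk)
      rcases le_or_gt 0 (a k) with h | h
      · rw [abs_of_nonneg h]; nlinarith
      · rw [abs_of_neg h]; nlinarith [abs_le.1 hdev, abs_of_neg h]
  have hxbdd : ∀ k, |x k| ≤ |c| + B := fun k => by
    simpa using (abs_add_le (x k - c) c).trans (by linarith [hxB k])
  have hsum : Summable fun k => c * a k + B * (|a k| - a k) :=
    (ha'.mul_left c).add ((ha.sub ha').mul_left B)
  calc ∑' k, a k * x k
      ≤ ∑' k, (c * a k + B * (|a k| - a k) + head k) :=
        (summable_mul_of_abs_le ha hxbdd).tsum_le_tsum hterm (hsum.add ((ha.mul_left B).indicator _))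
    _ = _ := by
        rw [hsum.tsum_add ((ha.mul_left B).indicator _), ← sum_eq_tsum_indicator, ← mul_sum,
          (ha'.mul_left c).tsum_add ((ha.sub ha').mul_left B), tsum_mul_left, tsum_mul_left,
          ha.tsum_sub ha']

lemma exists_abs_le_one_forall_le_tsum_mul {ι : Type*} (r : ι → ℕ → ℝ) (S : ι → Finset ℕ)
    (hS : Pairwise (Disjoint on S)) (hr : ∀ i, Summable fun k => |r i k|) :
    ∃ x : ℕ → ℝ, (∀ k, |x k| ≤ 1) ∧
      ∀ i, 2 * ∑ k ∈ S i, |r i k| - ∑' k, |r i k| ≤ ∑' k, r i k * x k := by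
  classical
  let σ : ℝ → ℝ := fun t => if 0 ≤ t then 1 else -1
  have hσ : ∀ t, t * σ t = |t| := fun t => by
    by_cases h : 0 ≤ t
    · simp [σ, h, abs_of_nonneg h]
    · simp [σ, h, abs_of_neg (not_le.1 h)]
  set x : ℕ → ℝ := fun k => if h : ∃ i, k ∈ S i then σ (r h.choose k) else 0 with hx_def
  have hx : ∀ k, |x k| ≤ 1 := fun k => by
    simp only [hx_def, σ]
    split_ifs <;> norm_num
  refine ⟨x, hx, fun i => ?_⟩
  have hterm : ∀ k, 2 * (S i : Set ℕ).indicator (fun k => |r i k|) k - |r i k| ≤ r i k * x k := by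
    intro k
    by_cases hk : k ∈ S i
    · have hex : ∃ j, k ∈ S j := ⟨i, hk⟩
      have hchoose : hex.choose = i := by
        by_contra hne
        exact Finset.disjoint_left.1 (hS hne) hex.choose_spec hk
      rw [Set.indicator_of_mem (by simpa using hk), hx_def]
      simp only [dif_pos hex, hchoose, hσ]
      linarith
    · have hbound : |r i k * x k| ≤ |r i k| := by
        rw [abs_mul]; exact mul_le_of_le_one_right (abs_nonneg _) (hx k)
      rw [Set.indicator_of_notMem (by simpa using hk)]
      linarith [neg_abs_le (r i k * x k)]
  have hind : Summable ((S i : Set ℕ).indicator fun k => |r i k|) := (hr i).indicator _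
  calc 2 * ∑ k ∈ S i, |r i k| - ∑' k, |r i k|
      = ∑' k, (2 * (S i : Set ℕ).indicator (fun k => |r i k|) k - |r i k|) := by
        rw [(hind.mul_left 2).tsum_sub (hr i), tsum_mul_left, sum_eq_tsum_indicator]
    _ ≤ ∑' k, r i k * x k :=
        ((hind.mul_left 2).sub (hr i)).tsum_le_tsum hterm (summable_mul_of_abs_le (hr i) hx)

end Series

lemma exists_monotone_forall_succ {P : ℕ → ℕ → ℕ → Prop} (h : ∀ i a, ∃ b, a ≤ b ∧ P i a b) :
    ∃ m : ℕ → ℕ, Monotone m ∧ ∀ i, P i (m i) (m (i + 1)) := by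
  choose f hf using h
  let m : ℕ → ℕ := fun i => Nat.rec 0 (fun i a => f i a) i
  exact ⟨m, monotone_nat_of_le_succ fun i => (hf i (m i)).1, fun i => (hf i (m i)).2⟩

section SupOverFamily

variable {ι : Type*} {f : ℕ → ι → ℝ} {s : Set ι}

lemma eventually_forall_le_of_limsup_sSup_image_le {B b ε : ℝ} (hB : ∀ n, ∀ i ∈ s, f n i ≤ B)
    (h : limsup (fun n => sSup (f n '' s)) atTop ≤ b) (hε : 0 < ε) :
    ∀ᶠ n in atTop, ∀ i ∈ s, f n i ≤ b + ε := by
  have hbdd : ∀ n, BddAbove (f n '' s) := fun n => ⟨B, Set.forall_mem_image.2 (hB n)⟩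
  have hsup : ∀ n, sSup (f n '' s) ≤ max B 0 := fun n =>
    Real.sSup_le (Set.forall_mem_image.2 fun i hi => (hB n i hi).trans (le_max_left _ _))
      (le_max_right _ _)
  filter_upwards [eventually_lt_of_limsup_lt (h.trans_lt (lt_add_of_pos_right b hε))
    (isBoundedUnder_of ⟨_, hsup⟩)] with n hn i hi
  exact (le_csSup (hbdd n) (Set.mem_image_of_mem _ hi)).trans hn.le

lemma limsup_sSup_image_le {B b : ℝ} (hs : s.Nonempty) (hB : ∀ n, ∀ i ∈ s, |f n i| ≤ B)
    (h : ∀ᶠ n in atTop, ∀ i ∈ s, f n i ≤ b) : limsup (fun n => sSup (f n '' s)) atTop ≤ b := by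
  obtain ⟨i₀, hi₀⟩ := hs
  have hbdd : ∀ n, BddAbove (f n '' s) :=
    fun n => ⟨B, Set.forall_mem_image.2 fun i hi => (le_abs_self _).trans (hB n i hi)⟩
  have hlow : ∀ n, -B ≤ sSup (f n '' s) := fun n =>
    (neg_le_of_abs_le (hB n i₀ hi₀)).trans (le_csSup (hbdd n) (Set.mem_image_of_mem _ hi₀))
  exact limsup_le_of_le (isBoundedUnder_of ⟨-B, hlow⟩).isCoboundedUnder_le
    (h.mono fun n hn => csSup_le ⟨_, Set.mem_image_of_mem _ hi₀⟩ (Set.forall_mem_image.2 hn))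

end SupOverFamily

section Matrices

def IsUnifLimsupBounded (𝒜 : Set (ℕ → ℕ → ℝ)) : Prop :=
  ∀ x : ℕ → ℝ, (∀ k, |x k| ≤ 1) → ∀ ε > 0,
    ∀ᶠ n in atTop, ∀ A ∈ 𝒜, ∑' k, A n k * x k ≤ limsup x atTop + ε

variable {𝒜 : Set (ℕ → ℕ → ℝ)} {C : ℝ}

lemma abs_tsum_mul_le_mul_of_mem
    (hnorm : ∀ A ∈ 𝒜, ∀ n, Summable (fun k => |A n k|) ∧ ∑' k, |A n k| ≤ C)
    {x : ℕ → ℝ} {M : ℝ} (hx : ∀ k, |x k| ≤ M) :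
    ∀ n, ∀ A ∈ 𝒜, |∑' k, A n k * x k| ≤ C * M := fun n A hA =>
  (abs_tsum_mul_le (hnorm A hA n).1 hx).trans
    (mul_le_mul_of_nonneg_right (hnorm A hA n).2 ((abs_nonneg _).trans (hx 0)))

lemma limsup_sSup_tsum_mul_le_limsup (h𝒜 : 𝒜.Nonempty)
    (hnorm : ∀ A ∈ 𝒜, ∀ n, Summable (fun k => |A n k|) ∧ ∑' k, |A n k| ≤ C)
    (hL1 : ∀ E : Finset ℕ, ∀ ε > 0, ∀ᶠ n in atTop, ∀ A ∈ 𝒜, ∑ k ∈ E, |A n k| ≤ ε)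
    (hL2 : ∀ ε > 0, ∀ᶠ n in atTop, ∀ A ∈ 𝒜, |∑' k, A n k - 1| ≤ ε)
    (hL3 : ∀ ε > 0, ∀ᶠ n in atTop, ∀ A ∈ 𝒜, |∑' k, |A n k| - 1| ≤ ε)
    {x : ℕ → ℝ} {M : ℝ} (hx : ∀ k, |x k| ≤ M) :
    limsup (fun n => sSup ((fun A : ℕ → ℕ → ℝ => ∑' k, A n k * x k) '' 𝒜)) atTop ≤
      limsup x atTop := by
  set L := limsup x atTop
  -- the bound on `A_n x` once the head over `range K` and both defects are at most `δ`
  let g : ℝ → ℝ := fun δ => L + δ * (1 + |L + δ| + 3 * (M + |L| + δ))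
  have hg : Tendsto g (nhdsWithin 0 (Set.Ioi 0)) (nhds L) := by
    have hgc : Continuous g := by fun_prop
    simpa [g] using (hgc.tendsto 0).mono_left nhdsWithin_le_nhds
  refine ge_of_tendsto hg (eventually_nhdsWithin_of_forall fun δ (hδ : 0 < δ) => ?_)
  obtain ⟨K, hK⟩ := eventually_atTop.1 (eventually_lt_of_limsup_lt (lt_add_of_pos_right L hδ)
    (isBoundedUnder_of ⟨M, fun k => (abs_le.1 (hx k)).2⟩))
  refine limsup_sSup_image_le h𝒜 (abs_tsum_mul_le_mul_of_mem hnorm hx) ?_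
  filter_upwards [hL1 (range K) δ hδ, hL2 δ hδ, hL3 δ hδ] with n h1 h2 h3 A hA
  have hxB : ∀ k, |x k - (L + δ)| ≤ M + |L| + δ := fun k =>
    (abs_sub _ _).trans (by linarith [hx k, abs_add_le L δ, abs_of_pos hδ])
  have hrow := tsum_mul_le_of_tail_le (hnorm A hA n).1 hxB fun k hk => (hK k hk).le
  have hB : 0 ≤ M + |L| + δ := (abs_nonneg _).trans (hxB 0)
  have hc : (L + δ) * (∑' k, A n k - 1) ≤ |L + δ| * δ := (le_abs_self _).trans <| by
    rw [abs_mul]; exact mul_le_mul_of_nonneg_left (h2 A hA) (abs_nonneg _)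
  have hneg : (M + |L| + δ) * (∑' k, |A n k| - ∑' k, A n k) ≤ (M + |L| + δ) * (2 * δ) :=
    mul_le_mul_of_nonneg_left (by linarith [(abs_le.1 (h2 A hA)).1, (abs_le.1 (h3 A hA)).2]) hB
  have hhead : (M + |L| + δ) * ∑ k ∈ range K, |A n k| ≤ (M + |L| + δ) * δ :=
    mul_le_mul_of_nonneg_left (h1 A hA) hB
  show _ ≤ g δ
  simp only [g]
  linarith

lemma eventually_forall_abs_apply_le
    (hT : IsUnifLimsupBounded 𝒜)
    (j : ℕ) {ε : ℝ} (hε : 0 < ε) : ∀ᶠ n in atTop, ∀ A ∈ 𝒜, |A n j| ≤ ε := by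
  have htest : ∀ s : ℝ, |s| ≤ 1 → ∀ᶠ n in atTop, ∀ A ∈ 𝒜, A n j * s ≤ ε := by
    intro s hs
    have hx : ∀ k, |(Pi.single j s : ℕ → ℝ) k| ≤ 1 := fun k => by
      rcases eq_or_ne k j with rfl | hk <;> simp [*]
    have hlim : limsup (Pi.single j s : ℕ → ℝ) atTop = 0 := by
      rw [limsup_congr (v := fun _ => 0) ((eventually_ne_atTop j).mono fun k hk => by simp [hk]),
        limsup_const]
    filter_upwards [hT _ hx ε hε] with n hn A hA
    simpa [hlim, Pi.single_apply] using hn A hA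
  filter_upwards [htest 1 (by norm_num), htest (-1) (by norm_num)] with n h1 h2 A hA
  exact abs_le.2 ⟨by linarith [h2 A hA], by linarith [h1 A hA]⟩

lemma eventually_forall_sum_abs_le
    (h : ∀ j, ∀ ε > 0, ∀ᶠ n in atTop, ∀ A ∈ 𝒜, |A n j| ≤ ε)
    (E : Finset ℕ) {ε : ℝ} (hε : 0 < ε) : ∀ᶠ n in atTop, ∀ A ∈ 𝒜, ∑ k ∈ E, |A n k| ≤ ε := by
  have hE : (0 : ℝ) < #E + 1 := by positivity
  filter_upwards [E.eventually_all.2 fun j _ => h j (ε / (#E + 1)) (by positivity)]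
    with n hn A hA
  calc ∑ k ∈ E, |A n k| ≤ ∑ _k ∈ E, ε / (#E + 1) := sum_le_sum fun k hk => hn k hk A hA
    _ = #E / (#E + 1) * ε := by rw [sum_const, nsmul_eq_mul]; ring
    _ ≤ ε := mul_le_of_le_one_left hε.le ((div_le_one hE).2 (by linarith))

lemma eventually_forall_abs_tsum_sub_one_le
    (hT : IsUnifLimsupBounded 𝒜)
    {ε : ℝ} (hε : 0 < ε) : ∀ᶠ n in atTop, ∀ A ∈ 𝒜, |∑' k, A n k - 1| ≤ ε := by
  filter_upwards [hT (fun _ => 1) (by simp) ε hε, hT (fun _ => -1) (by simp) ε hε]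
    with n h1 h2 A hA
  have h1 := h1 A hA
  have h2 := h2 A hA
  simp only [mul_one, mul_neg, tsum_neg, limsup_const] at h1 h2
  exact abs_le.2 ⟨by linarith, by linarith⟩

lemma eventually_forall_tsum_abs_le
    (hsum : ∀ A ∈ 𝒜, ∀ n, Summable fun k => |A n k|)
    (hT : IsUnifLimsupBounded 𝒜)
    (hL1 : ∀ E : Finset ℕ, ∀ ε > 0, ∀ᶠ n in atTop, ∀ A ∈ 𝒜, ∑ k ∈ E, |A n k| ≤ ε)
    {ε : ℝ} (hε : 0 < ε) : ∀ᶠ n in atTop, ∀ A ∈ 𝒜, ∑' k, |A n k| ≤ 1 + ε := by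
  by_contra hfail
  have hbig : ∃ᶠ n in atTop, ∃ A ∈ 𝒜, 1 + ε < ∑' k, |A n k| := by
    simpa only [not_eventually, not_forall, not_le, exists_prop] using hfail
  have hstep : ∀ i a, ∃ b, a ≤ b ∧ ∃ n, i ≤ n ∧ ∃ A ∈ 𝒜,
      1 + ε < ∑' k, |A n k| ∧ ∑' k, |A n k| - ε / 4 ≤ ∑ k ∈ Ico a b, |A n k| := by
    intro i a
    obtain ⟨n, hin, ⟨A, hA, hA1⟩, hhead⟩ :=
      (hbig.and_eventually (hL1 (range a) (ε / 8) (by positivity))).forall_exists_of_atTop i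
    obtain ⟨b, hb, hab⟩ := (((hsum A hA n).hasSum.tendsto_sum_nat.eventually_const_lt
      (sub_lt_self _ (by positivity : 0 < ε / 8))).and (eventually_ge_atTop a)).exists
    refine ⟨b, hab, n, hin, A, hA, hA1, ?_⟩
    linarith [sum_range_add_sum_Ico (fun k => |A n k|) hab, hhead A hA]
  obtain ⟨m, hm, hblocks⟩ := exists_monotone_forall_succ hstep
  choose n hn A hA hA1 hAm using hblocks
  have hdisj : Pairwise (Disjoint on fun i => Ico (m i) (m (i + 1))) := fun i j hij => by
    simpa [← Finset.disjoint_coe] using hm.pairwise_disjoint_on_Ico_succ hij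
  obtain ⟨x, hx, hxA⟩ := exists_abs_le_one_forall_le_tsum_mul (fun i => A i (n i))
    (fun i => Ico (m i) (m (i + 1))) hdisj fun i => hsum _ (hA i) _
  have hlim : limsup x atTop ≤ 1 :=
    limsup_le_of_le (isBoundedUnder_of ⟨-1, fun k => (abs_le.1 (hx k)).1⟩).isCoboundedUnder_le
      (Eventually.of_forall fun k => (abs_le.1 (hx k)).2)
  obtain ⟨N, hN⟩ := eventually_atTop.1 (hT x hx (ε / 4) (by positivity))
  linarith [hN (n N) (hn N) (A N) (hA N), hxA N, hA1 N, hAm N]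

lemma eventually_forall_abs_tsum_abs_sub_one_le
    (hsum : ∀ A ∈ 𝒜, ∀ n, Summable fun k => |A n k|)
    (hT : IsUnifLimsupBounded 𝒜)
    (hL1 : ∀ E : Finset ℕ, ∀ ε > 0, ∀ᶠ n in atTop, ∀ A ∈ 𝒜, ∑ k ∈ E, |A n k| ≤ ε)
    {ε : ℝ} (hε : 0 < ε) : ∀ᶠ n in atTop, ∀ A ∈ 𝒜, |∑' k, |A n k| - 1| ≤ ε := by
  filter_upwards [eventually_forall_abs_tsum_sub_one_le hT hε,
    eventually_forall_tsum_abs_le hsum hT hL1 hε] with n h2 h3 A hA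
  have hle : ∑' k, A n k ≤ ∑' k, |A n k| :=
    (hsum A hA n).of_abs.tsum_le_tsum (fun k => le_abs_self _) (hsum A hA n)
  exact abs_le.2 ⟨by linarith [(abs_le.1 (h2 A hA)).1], by linarith [h3 A hA]⟩

end Matrices

theorem stmt7 (𝒜 : Set (ℕ → ℕ → ℝ)) (h𝒜 : 𝒜.Nonempty) (C : ℝ)
    (hnorm : ∀ A ∈ 𝒜, ∀ n, Summable (fun k => |A n k|) ∧ ∑' k, |A n k| ≤ C) :
    (∀ x : ℕ → ℝ, (∃ M, ∀ n, |x n| ≤ M) →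
        limsup (fun n => sSup ((fun A : ℕ → ℕ → ℝ => ∑' k, A n k * x k) '' 𝒜)) atTop ≤
          limsup x atTop) ↔
      ((∀ E : Finset ℕ, ∀ ε > 0, ∃ N, ∀ n ≥ N, ∀ A ∈ 𝒜, |(∑ k ∈ E, |A n k|)| ≤ ε) ∧
        (∀ ε > 0, ∃ N, ∀ n ≥ N, ∀ A ∈ 𝒜, |(∑' k, A n k) - 1| ≤ ε) ∧
        (∀ ε > 0, ∃ N, ∀ n ≥ N, ∀ A ∈ 𝒜, |(∑' k, |A n k|) - 1| ≤ ε)) := by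
  constructor
  · intro hP
    have hT : IsUnifLimsupBounded 𝒜 := fun x hx ε hε =>
      eventually_forall_le_of_limsup_sSup_image_le
        (fun n A hA => (le_abs_self _).trans (abs_tsum_mul_le_mul_of_mem hnorm hx n A hA))
        (hP x ⟨1, hx⟩) hε
    have hsum : ∀ A ∈ 𝒜, ∀ n, Summable fun k => |A n k| := fun A hA n => (hnorm A hA n).1
    have hL1 := eventually_forall_sum_abs_le fun j _ => eventually_forall_abs_apply_le hT j
    refine ⟨fun E ε hε => eventually_atTop.1 ?_,
      fun ε hε => eventually_atTop.1 (eventually_forall_abs_tsum_sub_one_le hT hε),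
      fun ε hε => eventually_atTop.1 (eventually_forall_abs_tsum_abs_sub_one_le hsum hT hL1 hε)⟩
    simpa only [abs_sum_of_nonneg' fun _ => abs_nonneg _] using hL1 E hε
  · rintro ⟨hL1, hL2, hL3⟩ x ⟨M, hx⟩
    refine limsup_sSup_tsum_mul_le_limsup h𝒜 hnorm (fun E ε hε => ?_)
      (fun ε hε => eventually_atTop.2 (hL2 ε hε)) (fun ε hε => eventually_atTop.2 (hL3 ε hε)) hx
    exact (eventually_atTop.2 (hL1 E ε hε)).mono fun n h A hA => (le_abs_self _).trans (h A hA)
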